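/- Let Γ and Γ' be two multisets of formulas such that Γ' ⪰ Γ. For any formula F, if Γ → F has an I-proof then Γ' → F has an I-proof. Moreover, for any multiset Δ of formulas, if Γ → Δ has a C-proof Ξ, then Γ' → Δ has a C-proof whose nonconstructiveness measure is at most μ(Ξ). -/

import Mathlib

set_option maxHeartbeats 1000000

/-- Terms of a first-order language: variables (de Bruijn indices for
quantified variables) and constants. -/
inductive Tm : Type
  | var : ℕ → Tm
  | const : ℕ → Tm

namespace Tm

/-- Substitution of the term `u` for the variable with index `k`. -/
def subst (k : ℕ) (u : Tm) : Tm → Tm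
  | var n => if n = k then u else var n
  | const c => const c

/-- The constant `c` occurs in a term. -/
def constIn (c : ℕ) : Tm → Prop
  | var _ => False
  | const d => d = c

end Tm

/-- First-order formulas over the primitives ⊤, ⊥, ∧, ∨, ⊃, ∃, ∀.
Quantifiers are represented with de Bruijn indices. -/
inductive Fm : Type
  | top : Fm
  | bot : Fm
  | atom : ℕ → List Tm → Fm
  | conj : Fm → Fm → Fm
  | disj : Fm → Fm → Fm
  | imp : Fm → Fm → Fm
  | ex : Fm → Fm
  | all : Fm → Fm

namespace Fm

/-- Substitution of a term for the variable with de Bruijn index `k`. -/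
def subst (k : ℕ) (u : Tm) : Fm → Fm
  | top => top
  | bot => bot
  | atom p ts => atom p (ts.map (Tm.subst k u))
  | conj a b => conj (subst k u a) (subst k u b)
  | disj a b => disj (subst k u a) (subst k u b)
  | imp a b => imp (subst k u a) (subst k u b)
  | ex a => ex (subst (k + 1) u a)
  | all a => all (subst (k + 1) u a)

/-- `[t/x]B`: instantiation of the outermost bound variable of the body of a
quantified formula with the term `u`. -/
def inst (u : Tm) (a : Fm) : Fm := subst 0 u a

/-- Atomic formulas (⊤ and ⊥ are *not* atomic). -/
def isAtom : Fm → Prop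
  | atom _ _ => True
  | _ => False

/-- Formulas that need no right-introduction rule in a uniform/O_G proof:
atomic formulas and ⊥. -/
def neutral (F : Fm) : Prop := F.isAtom ∨ F = bot

/-- The constant `c` occurs in a formula. -/
def constIn (c : ℕ) : Fm → Prop
  | top => False
  | bot => False
  | atom _ ts => ∃ t ∈ ts, t.constIn c
  | conj a b => constIn c a ∨ constIn c b
  | disj a b => constIn c a ∨ constIn c b
  | imp a b => constIn c a ∨ constIn c b
  | ex a => constIn c a
  | all a => constIn c a

end Fm

/-- The eigenvariable (constant) `c` does not occur in the sequent `Γ → Δ`. -/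
def FreshSeq (c : ℕ) (Γ Δ : Multiset Fm) : Prop :=
  (∀ F ∈ Γ, ¬ F.constIn c) ∧ ∀ F ∈ Δ, ¬ F.constIn c

/-- The sequent `Γ → Δ` is an axiom: ⊤ ∈ Δ, or some `A` that is ⊥ or atomic
belongs to both `Γ` and `Δ`. -/
def AxSeq (Γ Δ : Multiset Fm) : Prop :=
  Fm.top ∈ Δ ∨ ∃ A : Fm, (A = Fm.bot ∨ A.isAtom) ∧ A ∈ Γ ∧ A ∈ Δ

/-- C-proofs: arbitrary derivations in the sequent calculus of the paper.
Sequents are pairs of multisets of formulas. -/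
inductive CProof : Multiset Fm → Multiset Fm → Type
  | ax {Γ Δ : Multiset Fm} (h : AxSeq Γ Δ) : CProof Γ Δ
  | contrL {B : Fm} {Γ Δ : Multiset Fm} (p : CProof (B ::ₘ B ::ₘ Γ) Δ) : CProof (B ::ₘ Γ) Δ
  | contrR {B : Fm} {Γ Δ : Multiset Fm} (p : CProof Γ (B ::ₘ B ::ₘ Δ)) : CProof Γ (B ::ₘ Δ)
  | botR {D : Fm} {Γ Δ : Multiset Fm} (p : CProof Γ (Fm.bot ::ₘ Δ)) : CProof Γ (D ::ₘ Δ)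
  | andL {B D : Fm} {Γ Δ : Multiset Fm} (p : CProof (B ::ₘ D ::ₘ (B.conj D) ::ₘ Γ) Δ) :
      CProof ((B.conj D) ::ₘ Γ) Δ
  | andR {B D : Fm} {Γ Δ : Multiset Fm} (p : CProof Γ (B ::ₘ Δ)) (q : CProof Γ (D ::ₘ Δ)) :
      CProof Γ ((B.conj D) ::ₘ Δ)
  | orL {B D : Fm} {Γ Δ : Multiset Fm} (p : CProof (B ::ₘ Γ) Δ) (q : CProof (D ::ₘ Γ) Δ) :
      CProof ((B.disj D) ::ₘ Γ) Δ
  | orR1 {B D : Fm} {Γ Δ : Multiset Fm} (p : CProof Γ (B ::ₘ Δ)) : CProof Γ ((B.disj D) ::ₘ Δ)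
  | orR2 {B D : Fm} {Γ Δ : Multiset Fm} (p : CProof Γ (D ::ₘ Δ)) : CProof Γ ((B.disj D) ::ₘ Δ)
  | impL {B D : Fm} {Γ Δ Θ : Multiset Fm} (p : CProof ((B.imp D) ::ₘ Γ) (B ::ₘ Δ))
      (q : CProof (D ::ₘ Γ) Θ) : CProof ((B.imp D) ::ₘ Γ) (Δ + Θ)
  | impR {B D : Fm} {Γ Δ : Multiset Fm} (p : CProof (B ::ₘ Γ) (D ::ₘ Δ)) :
      CProof Γ ((B.imp D) ::ₘ Δ)
  | allL {B : Fm} {Γ Δ : Multiset Fm} (t : Tm)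
      (p : CProof ((B.inst t) ::ₘ (Fm.all B) ::ₘ Γ) Δ) : CProof ((Fm.all B) ::ₘ Γ) Δ
  | exR {B : Fm} {Γ Δ : Multiset Fm} (t : Tm) (p : CProof Γ ((B.inst t) ::ₘ Δ)) :
      CProof Γ ((Fm.ex B) ::ₘ Δ)
  | exL {B : Fm} {Γ Δ : Multiset Fm} (c : ℕ) (hc : FreshSeq c ((Fm.ex B) ::ₘ Γ) Δ)
      (p : CProof ((B.inst (Tm.const c)) ::ₘ Γ) Δ) : CProof ((Fm.ex B) ::ₘ Γ) Δ
  | allR {B : Fm} {Γ Δ : Multiset Fm} (c : ℕ) (hc : FreshSeq c Γ ((Fm.all B) ::ₘ Δ))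
      (p : CProof Γ ((B.inst (Tm.const c)) ::ₘ Δ)) : CProof Γ ((Fm.all B) ::ₘ Δ)

namespace CProof

/-- An I-proof is a C-proof in which every sequent has exactly one formula in
its succedent. -/
def isI : ∀ (Γ Δ : Multiset Fm), CProof Γ Δ → Prop
  | _, _, @ax _ Δ _ => Multiset.card Δ = 1
  | _, _, @contrL _ _ Δ p => Multiset.card Δ = 1 ∧ isI _ _ p
  | _, _, @contrR B _ Δ p => Multiset.card (B ::ₘ Δ) = 1 ∧ isI _ _ p
  | _, _, @botR D _ Δ p => Multiset.card (D ::ₘ Δ) = 1 ∧ isI _ _ p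
  | _, _, @andL _ _ _ Δ p => Multiset.card Δ = 1 ∧ isI _ _ p
  | _, _, @andR B D _ Δ p q => Multiset.card ((B.conj D) ::ₘ Δ) = 1 ∧ isI _ _ p ∧ isI _ _ q
  | _, _, @orL _ _ _ Δ p q => Multiset.card Δ = 1 ∧ isI _ _ p ∧ isI _ _ q
  | _, _, @orR1 B D _ Δ p => Multiset.card ((B.disj D) ::ₘ Δ) = 1 ∧ isI _ _ p
  | _, _, @orR2 B D _ Δ p => Multiset.card ((B.disj D) ::ₘ Δ) = 1 ∧ isI _ _ p
  | _, _, @impL _ _ _ Δ Θ p q => Multiset.card (Δ + Θ) = 1 ∧ isI _ _ p ∧ isI _ _ q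
  | _, _, @impR B D _ Δ p => Multiset.card ((B.imp D) ::ₘ Δ) = 1 ∧ isI _ _ p
  | _, _, @allL _ _ Δ _ p => Multiset.card Δ = 1 ∧ isI _ _ p
  | _, _, @exR B _ Δ _ p => Multiset.card ((Fm.ex B) ::ₘ Δ) = 1 ∧ isI _ _ p
  | _, _, @exL _ _ Δ _ _ p => Multiset.card Δ = 1 ∧ isI _ _ p
  | _, _, @allR B _ Δ _ _ p => Multiset.card ((Fm.all B) ::ₘ Δ) = 1 ∧ isI _ _ p

end CProof

/-- Classical provability: `Γ ⊢_C F`. -/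
def CProv (Γ : Multiset Fm) (F : Fm) : Prop := Nonempty (CProof Γ ({F} : Multiset Fm))

/-- Intuitionistic provability: `Γ ⊢_I F`. -/
def IProv (Γ : Multiset Fm) (F : Fm) : Prop := ∃ p : CProof Γ ({F} : Multiset Fm), p.isI

namespace CProof

open Classical in
/-- The nonconstructiveness measure of a C-proof: the number of
nonconstructive occurrences of ∨-L and ⊃-R rules in it. -/
noncomputable def mu : ∀ (Γ Δ : Multiset Fm), CProof Γ Δ → ℕ
  | _, _, ax _ => 0
  | _, _, contrL p => mu _ _ p
  | _, _, contrR p => mu _ _ p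
  | _, _, botR p => mu _ _ p
  | _, _, andL p => mu _ _ p
  | _, _, andR p q => mu _ _ p + mu _ _ q
  | _, _, @orL B D Γ Δ p q =>
      mu _ _ p + mu _ _ q +
        (if ∃ F ∈ Δ, IProv (B ::ₘ Γ) F ∧ IProv (D ::ₘ Γ) F then 0 else 1)
  | _, _, orR1 p => mu _ _ p
  | _, _, orR2 p => mu _ _ p
  | _, _, impL p q => mu _ _ p + mu _ _ q
  | _, _, @impR B D Γ _ p => mu _ _ p + (if IProv (B ::ₘ Γ) D then 0 else 1)
  | _, _, allL _ p => mu _ _ p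
  | _, _, exR _ p => mu _ _ p
  | _, _, exL _ _ p => mu _ _ p
  | _, _, allR _ _ p => mu _ _ p

/-- The sequent `S → P` appears in the given C-proof. -/
def occursSeq : ∀ (Γ Δ : Multiset Fm), CProof Γ Δ → Multiset Fm → Multiset Fm → Prop
  | _, _, @ax Γ Δ _, S, P => Γ = S ∧ Δ = P
  | _, _, @contrL B Γ Δ p, S, P => ((B ::ₘ Γ) = S ∧ Δ = P) ∨ occursSeq _ _ p S P
  | _, _, @contrR B Γ Δ p, S, P => (Γ = S ∧ (B ::ₘ Δ) = P) ∨ occursSeq _ _ p S P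
  | _, _, @botR D Γ Δ p, S, P => (Γ = S ∧ (D ::ₘ Δ) = P) ∨ occursSeq _ _ p S P
  | _, _, @andL B D Γ Δ p, S, P => (((B.conj D) ::ₘ Γ) = S ∧ Δ = P) ∨ occursSeq _ _ p S P
  | _, _, @andR B D Γ Δ p q, S, P =>
      (Γ = S ∧ ((B.conj D) ::ₘ Δ) = P) ∨ occursSeq _ _ p S P ∨ occursSeq _ _ q S P
  | _, _, @orL B D Γ Δ p q, S, P =>
      (((B.disj D) ::ₘ Γ) = S ∧ Δ = P) ∨ occursSeq _ _ p S P ∨ occursSeq _ _ q S P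
  | _, _, @orR1 B D Γ Δ p, S, P => (Γ = S ∧ ((B.disj D) ::ₘ Δ) = P) ∨ occursSeq _ _ p S P
  | _, _, @orR2 B D Γ Δ p, S, P => (Γ = S ∧ ((B.disj D) ::ₘ Δ) = P) ∨ occursSeq _ _ p S P
  | _, _, @impL B D Γ Δ Θ p q, S, P =>
      (((B.imp D) ::ₘ Γ) = S ∧ (Δ + Θ) = P) ∨ occursSeq _ _ p S P ∨ occursSeq _ _ q S P
  | _, _, @impR B D Γ Δ p, S, P => (Γ = S ∧ ((B.imp D) ::ₘ Δ) = P) ∨ occursSeq _ _ p S P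
  | _, _, @allL B Γ Δ _ p, S, P => (((Fm.all B) ::ₘ Γ) = S ∧ Δ = P) ∨ occursSeq _ _ p S P
  | _, _, @exR B Γ Δ _ p, S, P => (Γ = S ∧ ((Fm.ex B) ::ₘ Δ) = P) ∨ occursSeq _ _ p S P
  | _, _, @exL B Γ Δ _ _ p, S, P => (((Fm.ex B) ::ₘ Γ) = S ∧ Δ = P) ∨ occursSeq _ _ p S P
  | _, _, @allR B Γ Δ _ _ p, S, P => (Γ = S ∧ ((Fm.all B) ::ₘ Δ) = P) ∨ occursSeq _ _ p S P

/-- `hasImpR p B S P D` holds when an ⊃-R rule with upper sequent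
`B,S → P,D` and lower sequent `S → P,B⊃D` occurs in the proof `p`. -/
def hasImpR : ∀ (Γ Δ : Multiset Fm), CProof Γ Δ → Fm → Multiset Fm → Multiset Fm → Fm → Prop
  | _, _, ax _, _, _, _, _ => False
  | _, _, contrL p, B, S, P, D => hasImpR _ _ p B S P D
  | _, _, contrR p, B, S, P, D => hasImpR _ _ p B S P D
  | _, _, botR p, B, S, P, D => hasImpR _ _ p B S P D
  | _, _, andL p, B, S, P, D => hasImpR _ _ p B S P D
  | _, _, andR p q, B, S, P, D => hasImpR _ _ p B S P D ∨ hasImpR _ _ q B S P D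
  | _, _, orL p q, B, S, P, D => hasImpR _ _ p B S P D ∨ hasImpR _ _ q B S P D
  | _, _, orR1 p, B, S, P, D => hasImpR _ _ p B S P D
  | _, _, orR2 p, B, S, P, D => hasImpR _ _ p B S P D
  | _, _, impL p q, B, S, P, D => hasImpR _ _ p B S P D ∨ hasImpR _ _ q B S P D
  | _, _, @impR B' D' Γ' Δ' p, B, S, P, D =>
      (B' = B ∧ Γ' = S ∧ Δ' = P ∧ D' = D) ∨ hasImpR _ _ p B S P D
  | _, _, allL _ p, B, S, P, D => hasImpR _ _ p B S P D
  | _, _, exR _ p, B, S, P, D => hasImpR _ _ p B S P D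
  | _, _, exL _ _ p, B, S, P, D => hasImpR _ _ p B S P D
  | _, _, allR _ _ p, B, S, P, D => hasImpR _ _ p B S P D

/-- `hasOrL p B D S P` holds when an ∨-L rule with upper sequents
`B,S → P` and `D,S → P` and lower sequent `B∨D,S → P` occurs in `p`. -/
def hasOrL : ∀ (Γ Δ : Multiset Fm), CProof Γ Δ → Fm → Fm → Multiset Fm → Multiset Fm → Prop
  | _, _, ax _, _, _, _, _ => False
  | _, _, contrL p, B, D, S, P => hasOrL _ _ p B D S P
  | _, _, contrR p, B, D, S, P => hasOrL _ _ p B D S P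
  | _, _, botR p, B, D, S, P => hasOrL _ _ p B D S P
  | _, _, andL p, B, D, S, P => hasOrL _ _ p B D S P
  | _, _, andR p q, B, D, S, P => hasOrL _ _ p B D S P ∨ hasOrL _ _ q B D S P
  | _, _, @orL B' D' Γ' Δ' p q, B, D, S, P =>
      (B' = B ∧ D' = D ∧ Γ' = S ∧ Δ' = P) ∨ hasOrL _ _ p B D S P ∨ hasOrL _ _ q B D S P
  | _, _, orR1 p, B, D, S, P => hasOrL _ _ p B D S P
  | _, _, orR2 p, B, D, S, P => hasOrL _ _ p B D S P
  | _, _, impL p q, B, D, S, P => hasOrL _ _ p B D S P ∨ hasOrL _ _ q B D S P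
  | _, _, impR p, B, D, S, P => hasOrL _ _ p B D S P
  | _, _, allL _ p, B, D, S, P => hasOrL _ _ p B D S P
  | _, _, exR _ p, B, D, S, P => hasOrL _ _ p B D S P
  | _, _, exL _ _ p, B, D, S, P => hasOrL _ _ p B D S P
  | _, _, allR _ _ p, B, D, S, P => hasOrL _ _ p B D S P

/-- Every formula in `Δ` is atomic or ⊥. -/
def neutralM (Δ : Multiset Fm) : Prop := ∀ F ∈ Δ, F.neutral

/-- A uniform proof: an I-proof in which any sequent whose succedent contains
a non-atomic formula occurs only as the lower sequent of an inference rule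
that introduces the top-level logical symbol of that formula. -/
def isUniform : ∀ (Γ Δ : Multiset Fm), CProof Γ Δ → Prop
  | _, _, @ax _ Δ _ => Multiset.card Δ = 1
  | _, _, @contrL _ _ Δ p => Multiset.card Δ = 1 ∧ neutralM Δ ∧ isUniform _ _ p
  | _, _, @contrR B _ Δ p =>
      Multiset.card (B ::ₘ Δ) = 1 ∧ neutralM (B ::ₘ Δ) ∧ isUniform _ _ p
  | _, _, @botR D _ Δ p =>
      Multiset.card (D ::ₘ Δ) = 1 ∧ neutralM (D ::ₘ Δ) ∧ isUniform _ _ p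
  | _, _, @andL _ _ _ Δ p => Multiset.card Δ = 1 ∧ neutralM Δ ∧ isUniform _ _ p
  | _, _, @andR B D _ Δ p q =>
      Multiset.card ((B.conj D) ::ₘ Δ) = 1 ∧ isUniform _ _ p ∧ isUniform _ _ q
  | _, _, @orL _ _ _ Δ p q =>
      Multiset.card Δ = 1 ∧ neutralM Δ ∧ isUniform _ _ p ∧ isUniform _ _ q
  | _, _, @orR1 B D _ Δ p => Multiset.card ((B.disj D) ::ₘ Δ) = 1 ∧ isUniform _ _ p
  | _, _, @orR2 B D _ Δ p => Multiset.card ((B.disj D) ::ₘ Δ) = 1 ∧ isUniform _ _ p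
  | _, _, @impL _ _ _ Δ Θ p q =>
      Multiset.card (Δ + Θ) = 1 ∧ neutralM (Δ + Θ) ∧ isUniform _ _ p ∧ isUniform _ _ q
  | _, _, @impR B D _ Δ p => Multiset.card ((B.imp D) ::ₘ Δ) = 1 ∧ isUniform _ _ p
  | _, _, @allL _ _ Δ _ p => Multiset.card Δ = 1 ∧ neutralM Δ ∧ isUniform _ _ p
  | _, _, @exR B _ Δ _ p => Multiset.card ((Fm.ex B) ::ₘ Δ) = 1 ∧ isUniform _ _ p
  | _, _, @exL _ _ Δ _ _ p => Multiset.card Δ = 1 ∧ neutralM Δ ∧ isUniform _ _ p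
  | _, _, @allR B _ Δ _ _ p => Multiset.card ((Fm.all B) ::ₘ Δ) = 1 ∧ isUniform _ _ p

end CProof

/-- Uniform provability: `Γ ⊢_O F`. -/
def UProv (Γ : Multiset Fm) (F : Fm) : Prop :=
  ∃ p : CProof Γ ({F} : Multiset Fm), p.isUniform

/-- The ordering ⪰ measuring the strength of formulas as assumptions. -/
inductive Fm.ge : Fm → Fm → Prop
  | refl (F : Fm) : Fm.ge F F
  | imp {F A B : Fm} : Fm.ge F B → Fm.ge F (Fm.imp A B)
  | disjl {F A B : Fm} : Fm.ge F A → Fm.ge F (Fm.disj A B)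
  | disjr {F A B : Fm} : Fm.ge F B → Fm.ge F (Fm.disj A B)
  | ex {F P : Fm} (c : ℕ) : Fm.ge F (P.inst (Tm.const c)) → Fm.ge F (Fm.ex P)

/-- `MsGe Γ₁ Γ₂`: there is an injective map κ from `Γ₂` into `Γ₁` with
`κ(F) ⪰ F` for every `F ∈ Γ₂`. -/
def MsGe (Γ₁ Γ₂ : Multiset Fm) : Prop :=
  ∃ Γ' ≤ Γ₁, Multiset.Rel Fm.ge Γ' Γ₂

mutual
  /-- G-formulas: G ::= ⊤ | ⊥ | A | G∧G | G∨G | D⊃G | ∃x G. -/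
  inductive GFm : Fm → Prop
    | top : GFm Fm.top
    | bot : GFm Fm.bot
    | atom {p : ℕ} {ts : List Tm} : GFm (Fm.atom p ts)
    | conj {a b : Fm} : GFm a → GFm b → GFm (Fm.conj a b)
    | disj {a b : Fm} : GFm a → GFm b → GFm (Fm.disj a b)
    | imp {a b : Fm} : DFm a → GFm b → GFm (Fm.imp a b)
    | ex {a : Fm} : GFm a → GFm (Fm.ex a)

  /-- D-formulas: D ::= ⊤ | ⊥ | A | G⊃D | D∧D | D∨D | ∃x D | ∀x D. -/
  inductive DFm : Fm → Prop
    | top : DFm Fm.top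
    | bot : DFm Fm.bot
    | atom {p : ℕ} {ts : List Tm} : DFm (Fm.atom p ts)
    | imp {a b : Fm} : GFm a → DFm b → DFm (Fm.imp a b)
    | conj {a b : Fm} : DFm a → DFm b → DFm (Fm.conj a b)
    | disj {a b : Fm} : DFm a → DFm b → DFm (Fm.disj a b)
    | ex {a : Fm} : DFm a → DFm (Fm.ex a)
    | all {a : Fm} : DFm a → DFm (Fm.all a)
end
/-- I_G-proofs: derivations in the intuitionistic sequent calculus (single
succedent formula) augmented with the derived rules ∨-L_G and res_G, in which
the eigenvariable proviso on ∃-L and ∀-R also disallows constants in `G`. -/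
inductive IGProof (G : Fm) : Multiset Fm → Fm → Type
  | ax {Γ : Multiset Fm} {F : Fm} (h : AxSeq Γ ({F} : Multiset Fm)) : IGProof G Γ F
  | contrL {B : Fm} {Γ : Multiset Fm} {F : Fm} (p : IGProof G (B ::ₘ B ::ₘ Γ) F) :
      IGProof G (B ::ₘ Γ) F
  | botR {Γ : Multiset Fm} {F : Fm} (p : IGProof G Γ Fm.bot) : IGProof G Γ F
  | andL {B D : Fm} {Γ : Multiset Fm} {F : Fm}
      (p : IGProof G (B ::ₘ D ::ₘ (B.conj D) ::ₘ Γ) F) : IGProof G ((B.conj D) ::ₘ Γ) F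
  | andR {B D : Fm} {Γ : Multiset Fm} (p : IGProof G Γ B) (q : IGProof G Γ D) :
      IGProof G Γ (B.conj D)
  | orL {B D : Fm} {Γ : Multiset Fm} {F : Fm} (p : IGProof G (B ::ₘ Γ) F)
      (q : IGProof G (D ::ₘ Γ) F) : IGProof G ((B.disj D) ::ₘ Γ) F
  | orR1 {B D : Fm} {Γ : Multiset Fm} (p : IGProof G Γ B) : IGProof G Γ (B.disj D)
  | orR2 {B D : Fm} {Γ : Multiset Fm} (p : IGProof G Γ D) : IGProof G Γ (B.disj D)
  | impL {B D : Fm} {Γ : Multiset Fm} {F : Fm} (p : IGProof G ((B.imp D) ::ₘ Γ) B)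
      (q : IGProof G (D ::ₘ Γ) F) : IGProof G ((B.imp D) ::ₘ Γ) F
  | impR {B D : Fm} {Γ : Multiset Fm} (p : IGProof G (B ::ₘ Γ) D) : IGProof G Γ (B.imp D)
  | allL {B : Fm} {Γ : Multiset Fm} {F : Fm} (t : Tm)
      (p : IGProof G ((B.inst t) ::ₘ (Fm.all B) ::ₘ Γ) F) : IGProof G ((Fm.all B) ::ₘ Γ) F
  | exR {B : Fm} {Γ : Multiset Fm} (t : Tm) (p : IGProof G Γ (B.inst t)) :
      IGProof G Γ (Fm.ex B)
  | exL {B : Fm} {Γ : Multiset Fm} {F : Fm} (c : ℕ)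
      (hc : FreshSeq c ((Fm.ex B) ::ₘ Γ) ({F} : Multiset Fm)) (hG : ¬ G.constIn c)
      (p : IGProof G ((B.inst (Tm.const c)) ::ₘ Γ) F) : IGProof G ((Fm.ex B) ::ₘ Γ) F
  | allR {B : Fm} {Γ : Multiset Fm} (c : ℕ)
      (hc : FreshSeq c Γ ({Fm.all B} : Multiset Fm)) (hG : ¬ G.constIn c)
      (p : IGProof G Γ (B.inst (Tm.const c))) : IGProof G Γ (Fm.all B)
  | orLG {B D : Fm} {Γ : Multiset Fm} {F : Fm} (p : IGProof G (B ::ₘ Γ) F)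
      (q : IGProof G (D ::ₘ Γ) G) : IGProof G ((B.disj D) ::ₘ Γ) F
  | resG {Γ : Multiset Fm} {F : Fm} (p : IGProof G Γ G) : IGProof G Γ F

namespace IGProof

/-- The number of occurrences of the ∨-L rule in an I_G-proof. -/
def orLCount : ∀ (G : Fm) (Γ : Multiset Fm) (F : Fm), IGProof G Γ F → ℕ
  | _, _, _, ax _ => 0
  | _, _, _, contrL p => orLCount _ _ _ p
  | _, _, _, botR p => orLCount _ _ _ p
  | _, _, _, andL p => orLCount _ _ _ p
  | _, _, _, andR p q => orLCount _ _ _ p + orLCount _ _ _ q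
  | _, _, _, orL p q => orLCount _ _ _ p + orLCount _ _ _ q + 1
  | _, _, _, orR1 p => orLCount _ _ _ p
  | _, _, _, orR2 p => orLCount _ _ _ p
  | _, _, _, impL p q => orLCount _ _ _ p + orLCount _ _ _ q
  | _, _, _, impR p => orLCount _ _ _ p
  | _, _, _, allL _ p => orLCount _ _ _ p
  | _, _, _, exR _ p => orLCount _ _ _ p
  | _, _, _, exL _ _ _ p => orLCount _ _ _ p
  | _, _, _, allR _ _ _ p => orLCount _ _ _ p
  | _, _, _, orLG p q => orLCount _ _ _ p + orLCount _ _ _ q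
  | _, _, _, resG p => orLCount _ _ _ p

/-- The height of an I_G-proof: the length of its longest branch. -/
def height : ∀ (G : Fm) (Γ : Multiset Fm) (F : Fm), IGProof G Γ F → ℕ
  | _, _, _, ax _ => 1
  | _, _, _, contrL p => height _ _ _ p + 1
  | _, _, _, botR p => height _ _ _ p + 1
  | _, _, _, andL p => height _ _ _ p + 1
  | _, _, _, andR p q => max (height _ _ _ p) (height _ _ _ q) + 1
  | _, _, _, orL p q => max (height _ _ _ p) (height _ _ _ q) + 1
  | _, _, _, orR1 p => height _ _ _ p + 1
  | _, _, _, orR2 p => height _ _ _ p + 1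
  | _, _, _, impL p q => max (height _ _ _ p) (height _ _ _ q) + 1
  | _, _, _, impR p => height _ _ _ p + 1
  | _, _, _, allL _ p => height _ _ _ p + 1
  | _, _, _, exR _ p => height _ _ _ p + 1
  | _, _, _, exL _ _ _ p => height _ _ _ p + 1
  | _, _, _, allR _ _ _ p => height _ _ _ p + 1
  | _, _, _, orLG p q => max (height _ _ _ p) (height _ _ _ q) + 1
  | _, _, _, resG p => height _ _ _ p + 1

/-- The number of sequents appearing in an I_G-proof. -/
def size : ∀ (G : Fm) (Γ : Multiset Fm) (F : Fm), IGProof G Γ F → ℕ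
  | _, _, _, ax _ => 1
  | _, _, _, contrL p => size _ _ _ p + 1
  | _, _, _, botR p => size _ _ _ p + 1
  | _, _, _, andL p => size _ _ _ p + 1
  | _, _, _, andR p q => size _ _ _ p + size _ _ _ q + 1
  | _, _, _, orL p q => size _ _ _ p + size _ _ _ q + 1
  | _, _, _, orR1 p => size _ _ _ p + 1
  | _, _, _, orR2 p => size _ _ _ p + 1
  | _, _, _, impL p q => size _ _ _ p + size _ _ _ q + 1
  | _, _, _, impR p => size _ _ _ p + 1
  | _, _, _, allL _ p => size _ _ _ p + 1
  | _, _, _, exR _ p => size _ _ _ p + 1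
  | _, _, _, exL _ _ _ p => size _ _ _ p + 1
  | _, _, _, allR _ _ _ p => size _ _ _ p + 1
  | _, _, _, orLG p q => size _ _ _ p + size _ _ _ q + 1
  | _, _, _, resG p => size _ _ _ p + 1

/-- O_G-proofs: I_G-proofs containing no occurrence of the ∨-L rule, in which
any sequent whose succedent contains a non-atomic formula occurs only as the
lower sequent of a rule introducing the top-level symbol of that formula. -/
def isOG : ∀ (G : Fm) (Γ : Multiset Fm) (F : Fm), IGProof G Γ F → Prop
  | _, _, _, ax _ => True
  | _, _, _, @contrL _ _ _ F p => F.neutral ∧ isOG _ _ _ p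
  | _, _, _, @botR _ _ F p => F.neutral ∧ isOG _ _ _ p
  | _, _, _, @andL _ _ _ _ F p => F.neutral ∧ isOG _ _ _ p
  | _, _, _, andR p q => isOG _ _ _ p ∧ isOG _ _ _ q
  | _, _, _, orL _ _ => False
  | _, _, _, orR1 p => isOG _ _ _ p
  | _, _, _, orR2 p => isOG _ _ _ p
  | _, _, _, @impL _ _ _ _ F p q => F.neutral ∧ isOG _ _ _ p ∧ isOG _ _ _ q
  | _, _, _, impR p => isOG _ _ _ p
  | _, _, _, @allL _ _ _ F _ p => F.neutral ∧ isOG _ _ _ p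
  | _, _, _, exR _ p => isOG _ _ _ p
  | _, _, _, @exL _ _ _ F _ _ _ p => F.neutral ∧ isOG _ _ _ p
  | _, _, _, allR _ _ _ p => isOG _ _ _ p
  | _, _, _, @orLG _ _ _ _ F p q => F.neutral ∧ isOG _ _ _ p ∧ isOG _ _ _ q
  | _, _, _, @resG _ _ F p => F.neutral ∧ isOG _ _ _ p

/-- `hasOrL p B D S F` holds when an ∨-L rule with upper sequents `B,S → F`
and `D,S → F` and lower sequent `B∨D,S → F` occurs in the I_G-proof `p`. -/
def hasOrL : ∀ (G : Fm) (Γ : Multiset Fm) (W : Fm), IGProof G Γ W →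
    Fm → Fm → Multiset Fm → Fm → Prop
  | _, _, _, ax _, _, _, _, _ => False
  | _, _, _, contrL p, B, D, S, F => hasOrL _ _ _ p B D S F
  | _, _, _, botR p, B, D, S, F => hasOrL _ _ _ p B D S F
  | _, _, _, andL p, B, D, S, F => hasOrL _ _ _ p B D S F
  | _, _, _, andR p q, B, D, S, F => hasOrL _ _ _ p B D S F ∨ hasOrL _ _ _ q B D S F
  | _, _, _, @orL _ B' D' Γ' F' p q, B, D, S, F =>
      (B' = B ∧ D' = D ∧ Γ' = S ∧ F' = F) ∨ hasOrL _ _ _ p B D S F ∨ hasOrL _ _ _ q B D S F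
  | _, _, _, orR1 p, B, D, S, F => hasOrL _ _ _ p B D S F
  | _, _, _, orR2 p, B, D, S, F => hasOrL _ _ _ p B D S F
  | _, _, _, impL p q, B, D, S, F => hasOrL _ _ _ p B D S F ∨ hasOrL _ _ _ q B D S F
  | _, _, _, impR p, B, D, S, F => hasOrL _ _ _ p B D S F
  | _, _, _, allL _ p, B, D, S, F => hasOrL _ _ _ p B D S F
  | _, _, _, exR _ p, B, D, S, F => hasOrL _ _ _ p B D S F
  | _, _, _, exL _ _ _ p, B, D, S, F => hasOrL _ _ _ p B D S F
  | _, _, _, allR _ _ _ p, B, D, S, F => hasOrL _ _ _ p B D S F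
  | _, _, _, orLG p q, B, D, S, F => hasOrL _ _ _ p B D S F ∨ hasOrL _ _ _ q B D S F
  | _, _, _, resG p, B, D, S, F => hasOrL _ _ _ p B D S F

end IGProof

/-- In the simplified syntax, `A` ranges over atomic formulas together with
⊤ and ⊥. -/
def AtFm (F : Fm) : Prop := F.isAtom ∨ F = Fm.top ∨ F = Fm.bot

/-- `disjs A [B₁,…,Bₙ]` is the disjunction `A ∨ B₁ ∨ … ∨ Bₙ`. -/
def disjs (A : Fm) : List Fm → Fm
  | [] => A
  | B :: l => Fm.disj A (disjs B l)

mutual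
  /-- Goals in the simplified syntax: G ::= A | G∧G | G∨G | D⊃G | ∃x G. -/
  inductive Goal : Fm → Prop
    | atm {A : Fm} : AtFm A → Goal A
    | conj {a b : Fm} : Goal a → Goal b → Goal (Fm.conj a b)
    | disj {a b : Fm} : Goal a → Goal b → Goal (Fm.disj a b)
    | imp {a b : Fm} : PCl a → Goal b → Goal (Fm.imp a b)
    | ex {a : Fm} : Goal a → Goal (Fm.ex a)

  /-- Program clauses in the simplified syntax:
  D ::= (A∨…∨A) | G⊃(A∨…∨A) | ∀x D. -/
  inductive PCl : Fm → Prop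
    | head {A : Fm} {l : List Fm} : AtFm A → (∀ B ∈ l, AtFm B) → PCl (disjs A l)
    | impHead {g A : Fm} {l : List Fm} : Goal g → AtFm A → (∀ B ∈ l, AtFm B) →
        PCl (Fm.imp g (disjs A l))
    | all {d : Fm} : PCl d → PCl (Fm.all d)
end

/-- The instances `[D]` of a program clause `D`, as pairs whose first
component is `∅` (`none`) or `{G}` (`some G`) and whose second component is
the collection of head atoms. -/
inductive ClInst : Fm → Option Fm → Multiset Fm → Prop
  | head {A : Fm} {l : List Fm} : AtFm A → (∀ B ∈ l, AtFm B) →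
      ClInst (disjs A l) none (A ::ₘ (l : Multiset Fm))
  | impHead {g A : Fm} {l : List Fm} : Goal g → AtFm A → (∀ B ∈ l, AtFm B) →
      ClInst (Fm.imp g (disjs A l)) (some g) (A ::ₘ (l : Multiset Fm))
  | all {d : Fm} {o : Option Fm} {m : Multiset Fm} (t : Tm) :
      ClInst (d.inst t) o m → ClInst (Fm.all d) o m

/-- `[Γ]`: the instances of the clauses in `Γ`. -/
def GammaInst (Γ : Multiset Fm) (o : Option Fm) (m : Multiset Fm) : Prop :=
  ∃ D ∈ Γ, ClInst D o m

/-- The reduced proof system relative to the goal `G`: axioms `Δ → ⊤`, the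
rules RESTART, ATOMIC and BACKCHAIN relativized to `G`, and ∨-R, ∧-R, ⊃-R
and ∃-R. -/
inductive RP (G : Fm) : Multiset Fm → Fm → Prop
  | topAx {Γ : Multiset Fm} : RP G Γ Fm.top
  | restart {Γ : Multiset Fm} {C : Fm} (hC : C.isAtom ∨ C = Fm.bot) (p : RP G Γ G) :
      RP G Γ C
  | atomic {Γ : Multiset Fm} {C : Fm} {m : Multiset Fm} (hC : C.isAtom ∨ C = Fm.bot)
      (h : GammaInst Γ none (C ::ₘ m) ∨ GammaInst Γ none (Fm.bot ::ₘ m))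
      (ps : ∀ A ∈ m, RP G (A ::ₘ Γ) G) : RP G Γ C
  | backchain {Γ : Multiset Fm} {C G' : Fm} {m : Multiset Fm}
      (hC : C.isAtom ∨ C = Fm.bot)
      (h : GammaInst Γ (some G') (C ::ₘ m) ∨ GammaInst Γ (some G') (Fm.bot ::ₘ m))
      (p : RP G Γ G') (ps : ∀ A ∈ m, RP G (A ::ₘ Γ) G) : RP G Γ C
  | orR1 {Γ : Multiset Fm} {B D : Fm} (p : RP G Γ B) : RP G Γ (B.disj D)
  | orR2 {Γ : Multiset Fm} {B D : Fm} (p : RP G Γ D) : RP G Γ (B.disj D)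
  | andR {Γ : Multiset Fm} {B D : Fm} (p : RP G Γ B) (q : RP G Γ D) : RP G Γ (B.conj D)
  | impR {Γ : Multiset Fm} {B D : Fm} (p : RP G (B ::ₘ Γ) D) : RP G Γ (B.imp D)
  | exR {Γ : Multiset Fm} {B : Fm} (t : Tm) (p : RP G Γ (B.inst t)) : RP G Γ (Fm.ex B)

section Infra

namespace Tm

def ren (r : ℕ → ℕ) : Tm → Tm
  | var n => var n
  | const c => const (r c)

lemma ren_subst (r : ℕ → ℕ) (k : ℕ) (u : Tm) :
    ∀ t : Tm, (Tm.subst k u t).ren r = Tm.subst k (u.ren r) (t.ren r)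
  | var n => by by_cases h : n = k <;> cases u <;> simp [subst, ren, h]
  | const c => by simp [subst, ren]

lemma ren_congr {r r' : ℕ → ℕ} :
    ∀ {t : Tm}, (∀ d, t.constIn d → r d = r' d) → t.ren r = t.ren r'
  | var _, _ => rfl
  | const c, h => by simp [ren, h c rfl]

def bnd : Tm → ℕ
  | var _ => 0
  | const c => c + 1

lemma lt_bnd {c : ℕ} : ∀ {t : Tm}, t.constIn c → c < t.bnd
  | var _, h => h.elim
  | const d, h => by cases h; simp [bnd]

end Tm

namespace Fm

def ren (r : ℕ → ℕ) : Fm → Fm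
  | top => top
  | bot => bot
  | atom p ts => atom p (ts.map (Tm.ren r))
  | conj a b => conj (ren r a) (ren r b)
  | disj a b => disj (ren r a) (ren r b)
  | imp a b => imp (ren r a) (ren r b)
  | ex a => ex (ren r a)
  | all a => all (ren r a)

lemma ren_subst (r : ℕ → ℕ) :
    ∀ (a : Fm) (k : ℕ) (u : Tm), (Fm.subst k u a).ren r = Fm.subst k (u.ren r) (a.ren r)
  | top, _, _ => rfl
  | bot, _, _ => rfl
  | atom p ts, k, u => by
      simp [subst, ren, List.map_map, Function.comp_def, Tm.ren_subst]
  | conj a b, k, u => by simp [subst, ren, ren_subst r a, ren_subst r b]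
  | disj a b, k, u => by simp [subst, ren, ren_subst r a, ren_subst r b]
  | imp a b, k, u => by simp [subst, ren, ren_subst r a, ren_subst r b]
  | ex a, k, u => by simp [subst, ren, ren_subst r a]
  | all a, k, u => by simp [subst, ren, ren_subst r a]

lemma ren_inst (r : ℕ → ℕ) (a : Fm) (u : Tm) :
    (a.inst u).ren r = (a.ren r).inst (u.ren r) := ren_subst r a 0 u

lemma ren_congr {r r' : ℕ → ℕ} :
    ∀ {a : Fm}, (∀ d, a.constIn d → r d = r' d) → a.ren r = a.ren r'
  | top, _ => rfl
  | bot, _ => rfl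
  | atom p ts, h => by
      simp only [ren, atom.injEq, true_and]
      exact List.map_congr_left fun t ht => Tm.ren_congr fun d hd => h d ⟨t, ht, hd⟩
  | conj a b, h => by
      simp only [ren, conj.injEq]
      exact ⟨ren_congr fun d hd => h d (Or.inl hd), ren_congr fun d hd => h d (Or.inr hd)⟩
  | disj a b, h => by
      simp only [ren, disj.injEq]
      exact ⟨ren_congr fun d hd => h d (Or.inl hd), ren_congr fun d hd => h d (Or.inr hd)⟩
  | imp a b, h => by
      simp only [ren, imp.injEq]
      exact ⟨ren_congr fun d hd => h d (Or.inl hd), ren_congr fun d hd => h d (Or.inr hd)⟩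
  | ex a, h => by simp only [ren, ex.injEq]; exact ren_congr h
  | all a, h => by simp only [ren, all.injEq]; exact ren_congr h

lemma ren_id : ∀ a : Fm, a.ren id = a
  | top => rfl
  | bot => rfl
  | atom p ts => by
      simp only [ren, atom.injEq, true_and]
      exact List.map_id'' (fun t => by cases t <;> rfl) ts
  | conj a b => by simp [ren, ren_id a, ren_id b]
  | disj a b => by simp [ren, ren_id a, ren_id b]
  | imp a b => by simp [ren, ren_id a, ren_id b]
  | ex a => by simp [ren, ren_id a]
  | all a => by simp [ren, ren_id a]

def bnd : Fm → ℕ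
  | top => 0
  | bot => 0
  | atom _ ts => (ts.map Tm.bnd).sum
  | conj a b => max (bnd a) (bnd b)
  | disj a b => max (bnd a) (bnd b)
  | imp a b => max (bnd a) (bnd b)
  | ex a => bnd a
  | all a => bnd a

lemma lt_bnd {c : ℕ} : ∀ a : Fm, a.constIn c → c < a.bnd
  | top, h => h.elim
  | bot, h => h.elim
  | atom p ts, h => by
      obtain ⟨t, ht, hc⟩ := h
      exact lt_of_lt_of_le (Tm.lt_bnd hc)
        (List.single_le_sum (fun x _ => Nat.zero_le x) _ (List.mem_map_of_mem (f := Tm.bnd) ht))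
  | conj a b, h => h.elim (fun h => lt_of_lt_of_le (lt_bnd a h) (le_max_left _ _))
      (fun h => lt_of_lt_of_le (lt_bnd b h) (le_max_right _ _))
  | disj a b, h => h.elim (fun h => lt_of_lt_of_le (lt_bnd a h) (le_max_left _ _))
      (fun h => lt_of_lt_of_le (lt_bnd b h) (le_max_right _ _))
  | imp a b, h => h.elim (fun h => lt_of_lt_of_le (lt_bnd a h) (le_max_left _ _))
      (fun h => lt_of_lt_of_le (lt_bnd b h) (le_max_right _ _))
  | ex a, h => lt_bnd a h
  | all a, h => lt_bnd a h

lemma not_constIn_of_bnd_le {c : ℕ} {a : Fm} (h : a.bnd ≤ c) : ¬ a.constIn c :=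
  fun hc => absurd (lt_bnd a hc) (not_lt.2 h)

lemma isAtom_ren {r : ℕ → ℕ} {a : Fm} : (a.ren r).isAtom ↔ a.isAtom := by
  cases a <;> simp [ren, isAtom]

lemma ren_eq_bot {r : ℕ → ℕ} {a : Fm} : a.ren r = bot ↔ a = bot := by
  cases a <;> simp [ren]

end Fm

/-- Bound on all constants occurring in a multiset of formulas. -/
def msBnd (Γ : Multiset Fm) : ℕ := (Γ.map Fm.bnd).sum

lemma msBnd_le {Γ : Multiset Fm} {F : Fm} (h : F ∈ Γ) : F.bnd ≤ msBnd Γ :=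
  Multiset.single_le_sum (fun x _ => Nat.zero_le x) _ (Multiset.mem_map_of_mem _ h)

lemma not_constIn_of_msBnd {Γ : Multiset Fm} {F : Fm} {c : ℕ} (h : F ∈ Γ)
    (hc : msBnd Γ ≤ c) : ¬ F.constIn c :=
  Fm.not_constIn_of_bnd_le (le_trans (msBnd_le h) hc)

lemma AxSeq.ren_weak {Γ Δ Γw Δw : Multiset Fm} {r : ℕ → ℕ} (h : AxSeq Γ Δ) :
    AxSeq (Γw + Γ.map (Fm.ren r)) (Δw + Δ.map (Fm.ren r)) := by
  rcases h with h | ⟨A, hA, hΓ, hΔ⟩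
  · exact Or.inl (by
      rw [Multiset.mem_add]
      exact Or.inr (by simpa [Fm.ren] using Multiset.mem_map_of_mem (Fm.ren r) h))
  · refine Or.inr ⟨A.ren r, ?_, ?_, ?_⟩
    · rcases hA with hA | hA
      · exact Or.inl (by rw [hA]; rfl)
      · exact Or.inr (Fm.isAtom_ren.2 hA)
    · exact Multiset.mem_add.2 (Or.inr (Multiset.mem_map_of_mem _ hΓ))
    · exact Multiset.mem_add.2 (Or.inr (Multiset.mem_map_of_mem _ hΔ))

end Infra

namespace CProof

def recast {Γ₁ Γ₂ Δ₁ Δ₂ : Multiset Fm} (hΓ : Γ₁ = Γ₂) (hΔ : Δ₁ = Δ₂)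
    (p : CProof Γ₁ Δ₁) : CProof Γ₂ Δ₂ := by subst hΓ; subst hΔ; exact p

@[simp] lemma isI_recast {Γ₁ Γ₂ Δ₁ Δ₂ : Multiset Fm} (hΓ : Γ₁ = Γ₂) (hΔ : Δ₁ = Δ₂)
    (p : CProof Γ₁ Δ₁) : isI _ _ (recast hΓ hΔ p) ↔ isI _ _ p := by
  subst hΓ; subst hΔ; exact Iff.rfl

@[simp] lemma mu_recast {Γ₁ Γ₂ Δ₁ Δ₂ : Multiset Fm} (hΓ : Γ₁ = Γ₂) (hΔ : Δ₁ = Δ₂)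
    (p : CProof Γ₁ Δ₁) : mu _ _ (recast hΓ hΔ p) = mu _ _ p := by
  subst hΓ; subst hΔ; rfl

lemma isI_card : ∀ {Γ Δ : Multiset Fm} (p : CProof Γ Δ), isI _ _ p → Multiset.card Δ = 1 := by
  intro Γ Δ p hI
  cases p <;> first
    | exact hI
    | exact hI.1

end CProof

lemma ite_le_ite {P Q : Prop} [Decidable P] [Decidable Q] (h : Q → P) :
    (if P then 0 else 1) ≤ (if Q then 0 else 1) := by
  split_ifs with h1 h2 <;> simp_all

lemma IProv_eq {Γ Γ' : Multiset Fm} {F : Fm} (h : Γ = Γ') : IProv Γ F → IProv Γ' F :=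
  h ▸ id

section Transfer

attribute [local simp] Multiset.map_cons Multiset.add_cons Multiset.cons_add Multiset.map_add

open CProof in
lemma transfer (cnd : Prop)
    (hIP : cnd → ∀ (S : Multiset Fm) (F : Fm) (r : ℕ → ℕ) (Γw : Multiset Fm),
      IProv S F → IProv (Γw + S.map (Fm.ren r)) (F.ren r))
    {Γ Δ : Multiset Fm} (p : CProof Γ Δ) :
    ∀ (r : ℕ → ℕ) (Γw Δw : Multiset Fm),
      ∃ q : CProof (Γw + Γ.map (Fm.ren r)) (Δw + Δ.map (Fm.ren r)),
        (CProof.isI _ _ p ∧ Δw = 0 → CProof.isI _ _ q) ∧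
        (cnd → CProof.mu _ _ q ≤ CProof.mu _ _ p) := by
  induction p with
  | @ax Γ Δ h =>
    intro r Γw Δw
    refine ⟨CProof.ax h.ren_weak, fun ⟨hI, hw⟩ => ?_, fun _ => le_refl _⟩
    subst hw
    simp [CProof.isI] at hI ⊢
    exact hI
  | @contrL B Γ Δ p ih =>
    intro r Γw Δw
    obtain ⟨q, h1, h2⟩ := ih r Γw Δw
    refine ⟨recast (by simp) rfl (CProof.contrL (B := B.ren r) (Γ := Γw + Γ.map (Fm.ren r)) (Δ := Δw + Δ.map (Fm.ren r)) (recast (by simp) rfl q)), ?_, ?_⟩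
    · rintro ⟨hI, hw⟩
      subst hw
      simp [CProof.isI] at hI ⊢
      exact ⟨hI.1, h1 ⟨hI.2, rfl⟩⟩
    · intro hc
      simpa [CProof.mu] using h2 hc
  | @contrR B Γ Δ p ih =>
    intro r Γw Δw
    obtain ⟨q, h1, h2⟩ := ih r Γw Δw
    refine ⟨recast rfl (by simp) (CProof.contrR (B := B.ren r) (Γ := Γw + Γ.map (Fm.ren r)) (Δ := Δw + Δ.map (Fm.ren r)) (recast rfl (by simp) q)), ?_, ?_⟩
    · rintro ⟨hI, hw⟩
      subst hw
      simp [CProof.isI] at hI ⊢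
      exact ⟨hI.1, h1 ⟨hI.2, rfl⟩⟩
    · intro hc
      simpa [CProof.mu] using h2 hc
  | @botR D Γ Δ p ih =>
    intro r Γw Δw
    obtain ⟨q, h1, h2⟩ := ih r Γw Δw
    refine ⟨recast rfl (by simp [Fm.ren]) (CProof.botR (D := D.ren r) (Γ := Γw + Γ.map (Fm.ren r)) (Δ := Δw + Δ.map (Fm.ren r))
      (recast rfl (by simp [Fm.ren]) q)), ?_, ?_⟩
    · rintro ⟨hI, hw⟩
      subst hw
      simp [CProof.isI] at hI ⊢
      exact ⟨hI.1, h1 ⟨hI.2, rfl⟩⟩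
    · intro hc
      simpa [CProof.mu] using h2 hc
  | @andL B D Γ Δ p ih =>
    intro r Γw Δw
    obtain ⟨q, h1, h2⟩ := ih r Γw Δw
    refine ⟨recast (by simp [Fm.ren]) rfl (CProof.andL (B := B.ren r) (D := D.ren r) (Γ := Γw + Γ.map (Fm.ren r)) (Δ := Δw + Δ.map (Fm.ren r)) (recast (by simp [Fm.ren]) rfl q)),
      ?_, ?_⟩
    · rintro ⟨hI, hw⟩
      subst hw
      simp [CProof.isI] at hI ⊢
      exact ⟨hI.1, h1 ⟨hI.2, rfl⟩⟩
    · intro hc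
      simpa [CProof.mu] using h2 hc
  | @andR B D Γ Δ p q ihp ihq =>
    intro r Γw Δw
    obtain ⟨qp, hp1, hp2⟩ := ihp r Γw Δw
    obtain ⟨qq, hq1, hq2⟩ := ihq r Γw Δw
    refine ⟨recast rfl (by simp [Fm.ren]) (CProof.andR (B := B.ren r) (D := D.ren r) (Γ := Γw + Γ.map (Fm.ren r)) (Δ := Δw + Δ.map (Fm.ren r)) (recast rfl (by simp) qp)
      (recast rfl (by simp) qq)), ?_, ?_⟩
    · rintro ⟨hI, hw⟩
      subst hw
      simp [CProof.isI] at hI ⊢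
      exact ⟨hI.1, hp1 ⟨hI.2.1, rfl⟩, hq1 ⟨hI.2.2, rfl⟩⟩
    · intro hc
      simp only [CProof.mu, mu_recast]
      exact Nat.add_le_add (hp2 hc) (hq2 hc)
  | @orL B D Γ Δ p q ihp ihq =>
    intro r Γw Δw
    obtain ⟨qp, hp1, hp2⟩ := ihp r Γw Δw
    obtain ⟨qq, hq1, hq2⟩ := ihq r Γw Δw
    refine ⟨recast (by simp [Fm.ren]) rfl (CProof.orL (B := B.ren r) (D := D.ren r) (Γ := Γw + Γ.map (Fm.ren r)) (Δ := Δw + Δ.map (Fm.ren r)) (recast (by simp) rfl qp)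
      (recast (by simp) rfl qq)), ?_, ?_⟩
    · rintro ⟨hI, hw⟩
      subst hw
      simp [CProof.isI] at hI ⊢
      exact ⟨hI.1, hp1 ⟨hI.2.1, rfl⟩, hq1 ⟨hI.2.2, rfl⟩⟩
    · intro hc
      simp only [CProof.mu, mu_recast]
      have hpq := Nat.add_le_add (hp2 hc) (hq2 hc)
      have himp : (∃ F ∈ Δ, IProv (B ::ₘ Γ) F ∧ IProv (D ::ₘ Γ) F) →
          (∃ F ∈ Δw + Δ.map (Fm.ren r),
            IProv (Fm.ren r B ::ₘ (Γw + Γ.map (Fm.ren r))) F ∧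
            IProv (Fm.ren r D ::ₘ (Γw + Γ.map (Fm.ren r))) F) := by
        rintro ⟨F, hF, hFp, hFq⟩
        exact ⟨F.ren r, Multiset.mem_add.2 (Or.inr (Multiset.mem_map_of_mem _ hF)),
          IProv_eq (by simp) (hIP hc (B ::ₘ Γ) F r Γw hFp),
          IProv_eq (by simp) (hIP hc (D ::ₘ Γ) F r Γw hFq)⟩
      split_ifs <;> first
        | omega
        | (rename_i hA hB; exact absurd (himp hB) hA)
  | @orR1 B D Γ Δ p ih =>
    intro r Γw Δw
    obtain ⟨q, h1, h2⟩ := ih r Γw Δw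
    refine ⟨recast rfl (by simp [Fm.ren]) (CProof.orR1 (B := B.ren r) (D := D.ren r) (Γ := Γw + Γ.map (Fm.ren r)) (Δ := Δw + Δ.map (Fm.ren r)) (recast rfl (by simp) q)), ?_, ?_⟩
    · rintro ⟨hI, hw⟩
      subst hw
      simp [CProof.isI] at hI ⊢
      exact ⟨hI.1, h1 ⟨hI.2, rfl⟩⟩
    · intro hc
      simpa [CProof.mu] using h2 hc
  | @orR2 B D Γ Δ p ih =>
    intro r Γw Δw
    obtain ⟨q, h1, h2⟩ := ih r Γw Δw
    refine ⟨recast rfl (by simp [Fm.ren]) (CProof.orR2 (B := B.ren r) (D := D.ren r) (Γ := Γw + Γ.map (Fm.ren r)) (Δ := Δw + Δ.map (Fm.ren r)) (recast rfl (by simp) q)), ?_, ?_⟩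
    · rintro ⟨hI, hw⟩
      subst hw
      simp [CProof.isI] at hI ⊢
      exact ⟨hI.1, h1 ⟨hI.2, rfl⟩⟩
    · intro hc
      simpa [CProof.mu] using h2 hc
  | @impL B D Γ Δ Θ p q ihp ihq =>
    intro r Γw Δw
    obtain ⟨qp, hp1, hp2⟩ := ihp r Γw Δw
    obtain ⟨qq, hq1, hq2⟩ := ihq r Γw 0
    refine ⟨recast (by simp [Fm.ren]) (by rw [Multiset.map_add, add_assoc])
      (CProof.impL (B := B.ren r) (D := D.ren r) (Γ := Γw + Γ.map (Fm.ren r)) (Δ := Δw + Δ.map (Fm.ren r)) (Θ := Θ.map (Fm.ren r)) (recast (by simp [Fm.ren]) (by simp) qp)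
        (recast (by simp) (by simp) qq)), ?_, ?_⟩
    · rintro ⟨hI, hw⟩
      subst hw
      simp [CProof.isI] at hI ⊢
      obtain ⟨hcard, hIp, hIq⟩ := hI
      have hΔ : Δ = 0 := by
        have := CProof.isI_card p hIp
        simp at this
        exact this
      refine ⟨?_, hp1 ⟨hIp, rfl⟩, hq1 ⟨hIq, rfl⟩⟩
      simp [hΔ] at hcard ⊢
      exact hcard
    · intro hc
      simp only [CProof.mu, mu_recast]
      exact Nat.add_le_add (hp2 hc) (hq2 hc)
  | @impR B D Γ Δ p ih =>
    intro r Γw Δw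
    obtain ⟨q, h1, h2⟩ := ih r Γw Δw
    refine ⟨recast rfl (by simp [Fm.ren]) (CProof.impR (B := B.ren r) (D := D.ren r) (Γ := Γw + Γ.map (Fm.ren r)) (Δ := Δw + Δ.map (Fm.ren r)) (recast (by simp) (by simp) q)),
      ?_, ?_⟩
    · rintro ⟨hI, hw⟩
      subst hw
      simp [CProof.isI] at hI ⊢
      exact ⟨hI.1, h1 ⟨hI.2, rfl⟩⟩
    · intro hc
      simp only [CProof.mu, mu_recast]
      have hh := h2 hc
      have himp : IProv (B ::ₘ Γ) D →
          IProv (Fm.ren r B ::ₘ (Γw + Γ.map (Fm.ren r))) (Fm.ren r D) := fun hiv =>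
        IProv_eq (by simp) (hIP hc (B ::ₘ Γ) D r Γw hiv)
      split_ifs <;> first
        | omega
        | (rename_i hA hB; exact absurd (himp hB) hA)
  | @allL B Γ Δ t p ih =>
    intro r Γw Δw
    obtain ⟨q, h1, h2⟩ := ih r Γw Δw
    refine ⟨recast (by simp [Fm.ren]) rfl
      (CProof.allL (B := B.ren r) (Γ := Γw + Γ.map (Fm.ren r)) (Δ := Δw + Δ.map (Fm.ren r)) (t.ren r)
        (recast (by simp [Fm.ren, Fm.ren_inst]) rfl q)), ?_, ?_⟩
    · rintro ⟨hI, hw⟩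
      subst hw
      simp [CProof.isI] at hI ⊢
      exact ⟨hI.1, h1 ⟨hI.2, rfl⟩⟩
    · intro hc
      simpa [CProof.mu] using h2 hc
  | @exR B Γ Δ t p ih =>
    intro r Γw Δw
    obtain ⟨q, h1, h2⟩ := ih r Γw Δw
    refine ⟨recast rfl (by simp [Fm.ren])
      (CProof.exR (B := B.ren r) (Γ := Γw + Γ.map (Fm.ren r)) (Δ := Δw + Δ.map (Fm.ren r)) (t.ren r)
        (recast rfl (by simp [Fm.ren_inst]) q)), ?_, ?_⟩
    · rintro ⟨hI, hw⟩
      subst hw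
      simp [CProof.isI] at hI ⊢
      exact ⟨hI.1, h1 ⟨hI.2, rfl⟩⟩
    · intro hc
      simpa [CProof.mu] using h2 hc
  | @exL B Γ Δ c hc p ih =>
    intro r Γw Δw
    set N : ℕ := msBnd ((Fm.ex (B.ren r)) ::ₘ (Γw + Δw + Γ.map (Fm.ren r)
      + Δ.map (Fm.ren r))) with hN
    set r' : ℕ → ℕ := fun d => if d = c then N else r d with hr'
    obtain ⟨q, h1, h2⟩ := ih r' Γw Δw
    have hBc : ¬ B.constIn c := hc.1 (Fm.ex B) (Multiset.mem_cons_self _ _)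
    have hΓmap : Γ.map (Fm.ren r') = Γ.map (Fm.ren r) := by
      refine Multiset.map_congr rfl fun G hG => ?_
      refine Fm.ren_congr fun d hd => ?_
      have hd' : d ≠ c := fun e =>
        hc.1 G (Multiset.mem_cons_of_mem hG) (e ▸ hd)
      simp [hr', hd']
    have hΔmap : Δ.map (Fm.ren r') = Δ.map (Fm.ren r) := by
      refine Multiset.map_congr rfl fun G hG => ?_
      refine Fm.ren_congr fun d hd => ?_
      have hd' : d ≠ c := fun e => hc.2 G hG (e ▸ hd)
      simp [hr', hd']
    have hBmap : (Fm.inst (Tm.const c) B).ren r' = Fm.inst (Tm.const N) (B.ren r) := by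
      rw [Fm.inst, Fm.ren_subst]
      have : B.ren r' = B.ren r :=
        Fm.ren_congr fun d hd => by
          have hd' : d ≠ c := fun e => hBc (e ▸ hd)
          simp [hr', hd']
      simp [Tm.ren, hr', Fm.inst, this]
      exact congrArg (Fm.subst 0 (Tm.const N)) this
    have hfresh : FreshSeq N ((Fm.ex (B.ren r)) ::ₘ (Γw + Γ.map (Fm.ren r)))
        (Δw + Δ.map (Fm.ren r)) := by
      constructor
      · intro F hF
        refine not_constIn_of_msBnd (Γ := (Fm.ex (B.ren r)) ::ₘ (Γw + Δw
          + Γ.map (Fm.ren r) + Δ.map (Fm.ren r))) ?_ le_rfl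
        rcases Multiset.mem_cons.1 hF with h | h
        · exact h ▸ Multiset.mem_cons_self _ _
        · rcases Multiset.mem_add.1 h with h | h
          · exact Multiset.mem_cons_of_mem (by simp [Multiset.mem_add, h])
          · exact Multiset.mem_cons_of_mem (by simp [Multiset.mem_add, h])
      · intro F hF
        refine not_constIn_of_msBnd (Γ := (Fm.ex (B.ren r)) ::ₘ (Γw + Δw
          + Γ.map (Fm.ren r) + Δ.map (Fm.ren r))) ?_ le_rfl
        rcases Multiset.mem_add.1 hF with h | h
        · exact Multiset.mem_cons_of_mem (by simp [Multiset.mem_add, h])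
        · exact Multiset.mem_cons_of_mem (by simp [Multiset.mem_add, h])
    have e1 : Γw + Multiset.map (Fm.ren r') (Fm.inst (Tm.const c) B ::ₘ Γ)
        = Fm.inst (Tm.const N) (B.ren r) ::ₘ (Γw + Multiset.map (Fm.ren r) Γ) := by
      rw [Multiset.map_cons, hΓmap, hBmap]; simp
    have e2 : Δw + Multiset.map (Fm.ren r') Δ = Δw + Multiset.map (Fm.ren r) Δ := by
      rw [hΔmap]
    have e3 : (Fm.ex (B.ren r)) ::ₘ (Γw + Multiset.map (Fm.ren r) Γ)
        = Γw + Multiset.map (Fm.ren r) (Fm.ex B ::ₘ Γ) := by simp [Fm.ren]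
    refine ⟨recast e3 rfl
      (CProof.exL (B := B.ren r) (Γ := Γw + Γ.map (Fm.ren r)) (Δ := Δw + Δ.map (Fm.ren r)) N hfresh
        (recast e1 e2 q)), ?_, ?_⟩
    · rintro ⟨hI, hw⟩
      subst hw
      simp [CProof.isI] at hI ⊢
      exact ⟨hI.1, h1 ⟨hI.2, rfl⟩⟩
    · intro hcn
      simpa [CProof.mu] using h2 hcn
  | @allR B Γ Δ c hc p ih =>
    intro r Γw Δw
    set N : ℕ := msBnd ((Fm.all (B.ren r)) ::ₘ (Γw + Δw + Γ.map (Fm.ren r)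
      + Δ.map (Fm.ren r))) with hN
    set r' : ℕ → ℕ := fun d => if d = c then N else r d with hr'
    obtain ⟨q, h1, h2⟩ := ih r' Γw Δw
    have hBc : ¬ B.constIn c := hc.2 (Fm.all B) (Multiset.mem_cons_self _ _)
    have hΓmap : Γ.map (Fm.ren r') = Γ.map (Fm.ren r) := by
      refine Multiset.map_congr rfl fun G hG => ?_
      refine Fm.ren_congr fun d hd => ?_
      have hd' : d ≠ c := fun e => hc.1 G hG (e ▸ hd)
      simp [hr', hd']
    have hΔmap : Δ.map (Fm.ren r') = Δ.map (Fm.ren r) := by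
      refine Multiset.map_congr rfl fun G hG => ?_
      refine Fm.ren_congr fun d hd => ?_
      have hd' : d ≠ c := fun e =>
        hc.2 G (Multiset.mem_cons_of_mem hG) (e ▸ hd)
      simp [hr', hd']
    have hBmap : (Fm.inst (Tm.const c) B).ren r' = Fm.inst (Tm.const N) (B.ren r) := by
      rw [Fm.inst, Fm.ren_subst]
      have : B.ren r' = B.ren r :=
        Fm.ren_congr fun d hd => by
          have hd' : d ≠ c := fun e => hBc (e ▸ hd)
          simp [hr', hd']
      simp [Tm.ren, hr', Fm.inst, this]
      exact congrArg (Fm.subst 0 (Tm.const N)) this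
    have hfresh : FreshSeq N (Γw + Γ.map (Fm.ren r))
        ((Fm.all (B.ren r)) ::ₘ (Δw + Δ.map (Fm.ren r))) := by
      constructor
      · intro F hF
        refine not_constIn_of_msBnd (Γ := (Fm.all (B.ren r)) ::ₘ (Γw + Δw
          + Γ.map (Fm.ren r) + Δ.map (Fm.ren r))) ?_ le_rfl
        rcases Multiset.mem_add.1 hF with h | h
        · exact Multiset.mem_cons_of_mem (by simp [Multiset.mem_add, h])
        · exact Multiset.mem_cons_of_mem (by simp [Multiset.mem_add, h])
      · intro F hF
        refine not_constIn_of_msBnd (Γ := (Fm.all (B.ren r)) ::ₘ (Γw + Δw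
          + Γ.map (Fm.ren r) + Δ.map (Fm.ren r))) ?_ le_rfl
        rcases Multiset.mem_cons.1 hF with h | h
        · exact h ▸ Multiset.mem_cons_self _ _
        · rcases Multiset.mem_add.1 h with h | h
          · exact Multiset.mem_cons_of_mem (by simp [Multiset.mem_add, h])
          · exact Multiset.mem_cons_of_mem (by simp [Multiset.mem_add, h])
    have e1 : Γw + Multiset.map (Fm.ren r') Γ = Γw + Multiset.map (Fm.ren r) Γ := by
      rw [hΓmap]
    have e2 : Δw + Multiset.map (Fm.ren r') (Fm.inst (Tm.const c) B ::ₘ Δ)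
        = Fm.inst (Tm.const N) (B.ren r) ::ₘ (Δw + Multiset.map (Fm.ren r) Δ) := by
      rw [Multiset.map_cons, hΔmap, hBmap]; simp
    have e3 : (Fm.all (B.ren r)) ::ₘ (Δw + Multiset.map (Fm.ren r) Δ)
        = Δw + Multiset.map (Fm.ren r) (Fm.all B ::ₘ Δ) := by simp [Fm.ren]
    refine ⟨recast rfl e3
      (CProof.allR (B := B.ren r) (Γ := Γw + Γ.map (Fm.ren r)) (Δ := Δw + Δ.map (Fm.ren r)) N hfresh
        (recast e1 e2 q)),
      ?_, ?_⟩
    · rintro ⟨hI, hw⟩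
      subst hw
      simp [CProof.isI] at hI ⊢
      exact ⟨hI.1, h1 ⟨hI.2, rfl⟩⟩
    · intro hcn
      simpa [CProof.mu] using h2 hcn

end Transfer

lemma msRenId (M : Multiset Fm) : M.map (Fm.ren id) = M := by
  have h : M.map (Fm.ren id) = M.map id := Multiset.map_congr rfl fun x _ => Fm.ren_id x
  rw [h, Multiset.map_id]

lemma IProv_transfer {S : Multiset Fm} {F : Fm} (r : ℕ → ℕ) (Γw : Multiset Fm)
    (h : IProv S F) : IProv (Γw + S.map (Fm.ren r)) (F.ren r) := by
  obtain ⟨p, hp⟩ := h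
  obtain ⟨q, h1, _⟩ := transfer False (fun h => h.elim) p r Γw 0
  refine ⟨CProof.recast rfl (by simp) q, ?_⟩
  rw [CProof.isI_recast]
  exact h1 ⟨hp, rfl⟩

lemma transferFull {Γ Δ : Multiset Fm} (p : CProof Γ Δ) (r : ℕ → ℕ) (Γw Δw : Multiset Fm) :
    ∃ q : CProof (Γw + Γ.map (Fm.ren r)) (Δw + Δ.map (Fm.ren r)),
      (CProof.isI _ _ p ∧ Δw = 0 → CProof.isI _ _ q) ∧ CProof.mu _ _ q ≤ CProof.mu _ _ p := by
  obtain ⟨q, h1, h2⟩ := transfer True (fun _ S F r Γw h => IProv_transfer r Γw h) p r Γw Δw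
  exact ⟨q, h1, h2 trivial⟩

lemma MsGe.rfl (Γ : Multiset Fm) : MsGe Γ Γ :=
  ⟨Γ, le_refl _, Multiset.rel_refl_of_refl_on fun x _ => Fm.ge.refl x⟩

lemma MsGe.cons {Γ' Γ : Multiset Fm} {F B : Fm} (hge : Fm.ge F B) (h : MsGe Γ' Γ) :
    MsGe (F ::ₘ Γ') (B ::ₘ Γ) := by
  obtain ⟨Γ'', hle, hrel⟩ := h
  exact ⟨F ::ₘ Γ'', Multiset.cons_le_cons _ hle, Multiset.Rel.cons hge hrel⟩

lemma MsGe_cons_right {Γ' Γ : Multiset Fm} {B : Fm} (h : MsGe Γ' (B ::ₘ Γ)) :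
    ∃ F Γ₀, Fm.ge F B ∧ Γ' = F ::ₘ Γ₀ ∧ MsGe Γ₀ Γ := by
  obtain ⟨Γ'', hle, hrel⟩ := h
  obtain ⟨a, t, hab, hrel', rfl⟩ := Multiset.rel_cons_right.mp hrel
  obtain ⟨u, rfl⟩ := Multiset.le_iff_exists_add.mp hle
  exact ⟨a, t + u, hab, by simp [Multiset.cons_add], ⟨t, Multiset.le_add_right _ _, hrel'⟩⟩

lemma ge_eq_of_atom {F A : Fm} (h : Fm.ge F A) (hA : A = Fm.bot ∨ A.isAtom) : F = A := by
  cases h with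
  | refl => rfl
  | imp _ => rcases hA with h | h <;> simp [Fm.isAtom] at h
  | disjl _ => rcases hA with h | h <;> simp [Fm.isAtom] at h
  | disjr _ => rcases hA with h | h <;> simp [Fm.isAtom] at h
  | ex _ _ => rcases hA with h | h <;> simp [Fm.isAtom] at h

lemma MsGe_mem {Γ' Γ : Multiset Fm} (h : MsGe Γ' Γ) {A : Fm} (hA : A ∈ Γ)
    (hAt : A = Fm.bot ∨ A.isAtom) : A ∈ Γ' := by
  obtain ⟨Γ₀, rfl⟩ := Multiset.exists_cons_of_mem hA
  obtain ⟨F, Γ₀', hgeF, rfl, _⟩ := MsGe_cons_right h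
  rw [ge_eq_of_atom hgeF hAt]
  exact Multiset.mem_cons_self _ _

section GeTransfer

attribute [local simp] Multiset.map_cons Multiset.add_cons Multiset.cons_add Multiset.map_add

open CProof in
lemma geTransfer (cnd : Prop)
    (hIP : cnd → ∀ (Γ Γ' : Multiset Fm) (F : Fm), MsGe Γ' Γ → IProv Γ F → IProv Γ' F)
    {Γ Δ : Multiset Fm} (p : CProof Γ Δ) :
    ∀ (r : ℕ → ℕ) (Γ' : Multiset Fm), MsGe Γ' (Γ.map (Fm.ren r)) →
      ∃ q : CProof Γ' (Δ.map (Fm.ren r)),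
        (CProof.isI _ _ p → CProof.isI _ _ q) ∧
        (cnd → CProof.mu _ _ q ≤ CProof.mu _ _ p) := by
  have hIProvW : ∀ (S Γ'' : Multiset Fm) (B F : Fm) (r : ℕ → ℕ), cnd →
      MsGe Γ'' (S.map (Fm.ren r)) → IProv (B ::ₘ S) F →
      IProv ((B.ren r) ::ₘ Γ'') (F.ren r) := by
    intro S Γ'' B F r hc hge hiv
    have h1 : IProv ((B.ren r) ::ₘ S.map (Fm.ren r)) (F.ren r) :=
      IProv_eq (by simp) (IProv_transfer r 0 hiv)
    exact hIP hc _ _ _ (MsGe.cons (Fm.ge.refl _) hge) h1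
  induction p with
  | @ax Γ Δ h =>
    intro r Γ' hge
    have hax : AxSeq Γ' (Δ.map (Fm.ren r)) := by
      rcases h with h | ⟨A, hA, hΓ, hΔ⟩
      · exact Or.inl (by simpa [Fm.ren] using Multiset.mem_map_of_mem (Fm.ren r) h)
      · refine Or.inr ⟨A.ren r, ?_, ?_, Multiset.mem_map_of_mem _ hΔ⟩
        · rcases hA with hA | hA
          · exact Or.inl (by rw [hA]; rfl)
          · exact Or.inr (Fm.isAtom_ren.2 hA)
        · refine MsGe_mem hge (Multiset.mem_map_of_mem _ hΓ) ?_
          rcases hA with hA | hA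
          · exact Or.inl (by rw [hA]; rfl)
          · exact Or.inr (Fm.isAtom_ren.2 hA)
    refine ⟨CProof.ax hax, fun hI => ?_, fun _ => le_refl _⟩
    simp [CProof.isI] at hI ⊢
    exact hI
  | @contrL B Γ Δ p ih =>
    intro r Γ' hge
    have hge2 : MsGe Γ' ((B.ren r) ::ₘ Γ.map (Fm.ren r)) := by simpa using hge
    obtain ⟨F, Γ₀, hgeF, rfl, hge₀⟩ := MsGe_cons_right hge2
    obtain ⟨q, h1, h2⟩ := ih r (F ::ₘ F ::ₘ Γ₀)
      (by simp only [Multiset.map_cons]; exact MsGe.cons hgeF (MsGe.cons hgeF hge₀))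
    refine ⟨CProof.contrL q, fun hI => ?_, fun hc => ?_⟩
    · simp [CProof.isI] at hI ⊢
      exact ⟨hI.1, h1 hI.2⟩
    · simpa [CProof.mu] using h2 hc
  | @contrR B Γ Δ p ih =>
    intro r Γ' hge
    obtain ⟨q, h1, h2⟩ := ih r Γ' hge
    refine ⟨recast rfl (by simp) (CProof.contrR (B := B.ren r) (Δ := Δ.map (Fm.ren r))
      (recast rfl (by simp) q)), fun hI => ?_, fun hc => ?_⟩
    · simp [CProof.isI] at hI ⊢
      exact ⟨hI.1, h1 hI.2⟩
    · simpa [CProof.mu] using h2 hc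
  | @botR D Γ Δ p ih =>
    intro r Γ' hge
    obtain ⟨q, h1, h2⟩ := ih r Γ' hge
    refine ⟨recast rfl (by simp [Fm.ren]) (CProof.botR (D := D.ren r) (Δ := Δ.map (Fm.ren r))
      (recast rfl (by simp [Fm.ren]) q)), fun hI => ?_, fun hc => ?_⟩
    · simp [CProof.isI] at hI ⊢
      exact ⟨hI.1, h1 hI.2⟩
    · simpa [CProof.mu] using h2 hc
  | @andL B D Γ Δ p ih =>
    intro r Γ' hge
    have hge2 : MsGe Γ' (((B.ren r).conj (D.ren r)) ::ₘ Γ.map (Fm.ren r)) := by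
      simpa [Fm.ren] using hge
    obtain ⟨F, Γ₀, hgeF, rfl, hge₀⟩ := MsGe_cons_right hge2
    cases hgeF with
    | refl =>
      obtain ⟨q, h1, h2⟩ := ih r ((B.ren r) ::ₘ (D.ren r) ::ₘ ((B.ren r).conj (D.ren r)) ::ₘ Γ₀)
        (by simp only [Multiset.map_cons, Fm.ren];
            exact MsGe.cons (Fm.ge.refl _) (MsGe.cons (Fm.ge.refl _)
              (MsGe.cons (Fm.ge.refl _) hge₀)))
      refine ⟨CProof.andL q, fun hI => ?_, fun hc => ?_⟩
      · simp [CProof.isI] at hI ⊢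
        exact ⟨hI.1, h1 hI.2⟩
      · simpa [CProof.mu] using h2 hc
  | @andR B D Γ Δ p q ihp ihq =>
    intro r Γ' hge
    obtain ⟨qp, hp1, hp2⟩ := ihp r Γ' hge
    obtain ⟨qq, hq1, hq2⟩ := ihq r Γ' hge
    refine ⟨recast rfl (by simp [Fm.ren])
      (CProof.andR (B := B.ren r) (D := D.ren r) (Δ := Δ.map (Fm.ren r))
        (recast rfl (by simp) qp) (recast rfl (by simp) qq)), fun hI => ?_, fun hc => ?_⟩
    · simp [CProof.isI] at hI ⊢
      exact ⟨hI.1, hp1 hI.2.1, hq1 hI.2.2⟩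
    · simp only [CProof.mu, mu_recast]
      exact Nat.add_le_add (hp2 hc) (hq2 hc)
  | @orL B D Γ Δ p q ihp ihq =>
    intro r Γ' hge
    have hge2 : MsGe Γ' (((B.ren r).disj (D.ren r)) ::ₘ Γ.map (Fm.ren r)) := by
      simpa [Fm.ren] using hge
    obtain ⟨F, Γ₀, hgeF, rfl, hge₀⟩ := MsGe_cons_right hge2
    cases hgeF with
    | refl =>
      obtain ⟨qp, hp1, hp2⟩ := ihp r ((B.ren r) ::ₘ Γ₀)
        (by simp only [Multiset.map_cons]; exact MsGe.cons (Fm.ge.refl _) hge₀)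
      obtain ⟨qq, hq1, hq2⟩ := ihq r ((D.ren r) ::ₘ Γ₀)
        (by simp only [Multiset.map_cons]; exact MsGe.cons (Fm.ge.refl _) hge₀)
      refine ⟨CProof.orL qp qq, fun hI => ?_, fun hc => ?_⟩
      · simp [CProof.isI] at hI ⊢
        exact ⟨hI.1, hp1 hI.2.1, hq1 hI.2.2⟩
      · simp only [CProof.mu]
        have hpq := Nat.add_le_add (hp2 hc) (hq2 hc)
        have himp : (∃ F ∈ Δ, IProv (B ::ₘ Γ) F ∧ IProv (D ::ₘ Γ) F) →
            (∃ F ∈ Δ.map (Fm.ren r),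
              IProv ((B.ren r) ::ₘ Γ₀) F ∧ IProv ((D.ren r) ::ₘ Γ₀) F) := by
          rintro ⟨F, hF, hFp, hFq⟩
          exact ⟨F.ren r, Multiset.mem_map_of_mem _ hF,
            hIProvW Γ Γ₀ B F r hc hge₀ hFp, hIProvW Γ Γ₀ D F r hc hge₀ hFq⟩
        split_ifs <;> first
          | omega
          | (rename_i hA hB; exact absurd (himp hB) hA)
    | disjl hge' =>
      obtain ⟨qp, hp1, hp2⟩ := ihp r (F ::ₘ Γ₀)
        (by simp only [Multiset.map_cons]; exact MsGe.cons hge' hge₀)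
      refine ⟨qp, fun hI => ?_, fun hc => ?_⟩
      · simp [CProof.isI] at hI
        exact hp1 hI.2.1
      · have := hp2 hc
        simp only [CProof.mu]
        split_ifs <;> omega
    | disjr hge' =>
      obtain ⟨qq, hq1, hq2⟩ := ihq r (F ::ₘ Γ₀)
        (by simp only [Multiset.map_cons]; exact MsGe.cons hge' hge₀)
      refine ⟨qq, fun hI => ?_, fun hc => ?_⟩
      · simp [CProof.isI] at hI
        exact hq1 hI.2.2
      · have := hq2 hc
        simp only [CProof.mu]
        split_ifs <;> omega
  | @orR1 B D Γ Δ p ih =>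
    intro r Γ' hge
    obtain ⟨q, h1, h2⟩ := ih r Γ' hge
    refine ⟨recast rfl (by simp [Fm.ren])
      (CProof.orR1 (B := B.ren r) (D := D.ren r) (Δ := Δ.map (Fm.ren r))
        (recast rfl (by simp) q)), fun hI => ?_, fun hc => ?_⟩
    · simp [CProof.isI] at hI ⊢
      exact ⟨hI.1, h1 hI.2⟩
    · simpa [CProof.mu] using h2 hc
  | @orR2 B D Γ Δ p ih =>
    intro r Γ' hge
    obtain ⟨q, h1, h2⟩ := ih r Γ' hge
    refine ⟨recast rfl (by simp [Fm.ren])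
      (CProof.orR2 (B := B.ren r) (D := D.ren r) (Δ := Δ.map (Fm.ren r))
        (recast rfl (by simp) q)), fun hI => ?_, fun hc => ?_⟩
    · simp [CProof.isI] at hI ⊢
      exact ⟨hI.1, h1 hI.2⟩
    · simpa [CProof.mu] using h2 hc
  | @impL B D Γ Δ Θ p q ihp ihq =>
    intro r Γ' hge
    have hge2 : MsGe Γ' (((B.ren r).imp (D.ren r)) ::ₘ Γ.map (Fm.ren r)) := by
      simpa [Fm.ren] using hge
    obtain ⟨F, Γ₀, hgeF, rfl, hge₀⟩ := MsGe_cons_right hge2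
    cases hgeF with
    | refl =>
      obtain ⟨qp, hp1, hp2⟩ := ihp r (((B.ren r).imp (D.ren r)) ::ₘ Γ₀)
        (by simp only [Multiset.map_cons, Fm.ren]; exact MsGe.cons (Fm.ge.refl _) hge₀)
      obtain ⟨qq, hq1, hq2⟩ := ihq r ((D.ren r) ::ₘ Γ₀)
        (by simp only [Multiset.map_cons]; exact MsGe.cons (Fm.ge.refl _) hge₀)
      refine ⟨recast rfl (by simp)
        (CProof.impL (B := B.ren r) (D := D.ren r) (Γ := Γ₀)
          (Δ := Δ.map (Fm.ren r)) (Θ := Θ.map (Fm.ren r))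
          (recast rfl (by simp) qp) qq), fun hI => ?_, fun hc => ?_⟩
      · simp [CProof.isI] at hI ⊢
        exact ⟨hI.1, hp1 hI.2.1, hq1 hI.2.2⟩
      · simp only [CProof.mu, mu_recast]
        exact Nat.add_le_add (hp2 hc) (hq2 hc)
    | imp hge' =>
      obtain ⟨qq, hq1, hq2⟩ := ihq r (F ::ₘ Γ₀)
        (by simp only [Multiset.map_cons]; exact MsGe.cons hge' hge₀)
      obtain ⟨qw, hw1, hw2⟩ := transferFull qq id 0 (Δ.map (Fm.ren r))
      refine ⟨recast (by simp [msRenId, Fm.ren_id, Multiset.map_map])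
        (by simp [msRenId, Fm.ren_id, Multiset.map_map]) qw, fun hI => ?_, fun hc => ?_⟩
      · simp [CProof.isI] at hI
        obtain ⟨hcard, hIp, hIq⟩ := hI
        have hΔ : Δ = 0 := by
          have := CProof.isI_card p hIp
          simp at this
          exact this
        rw [isI_recast]
        exact hw1 ⟨hq1 hIq, by simp [hΔ]⟩
      · have h1 := hq2 hc
        simp only [CProof.mu, mu_recast]
        omega
  | @impR B D Γ Δ p ih =>
    intro r Γ' hge
    obtain ⟨q, h1, h2⟩ := ih r ((B.ren r) ::ₘ Γ')
      (by simp only [Multiset.map_cons]; exact MsGe.cons (Fm.ge.refl _) hge)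
    refine ⟨recast rfl (by simp [Fm.ren])
      (CProof.impR (B := B.ren r) (D := D.ren r) (Δ := Δ.map (Fm.ren r))
        (recast rfl (by simp) q)), fun hI => ?_, fun hc => ?_⟩
    · simp [CProof.isI] at hI ⊢
      exact ⟨hI.1, h1 hI.2⟩
    · simp only [CProof.mu, mu_recast]
      have hh := h2 hc
      have himp : IProv (B ::ₘ Γ) D → IProv ((B.ren r) ::ₘ Γ') (D.ren r) :=
        fun hiv => hIProvW Γ Γ' B D r hc hge hiv
      split_ifs <;> first
        | omega
        | (rename_i hA hB; exact absurd (himp hB) hA)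
  | @allL B Γ Δ t p ih =>
    intro r Γ' hge
    have hge2 : MsGe Γ' ((Fm.all (B.ren r)) ::ₘ Γ.map (Fm.ren r)) := by
      simpa [Fm.ren] using hge
    obtain ⟨F, Γ₀, hgeF, rfl, hge₀⟩ := MsGe_cons_right hge2
    cases hgeF with
    | refl =>
      obtain ⟨q, h1, h2⟩ := ih r
        ((Fm.inst (t.ren r) (B.ren r)) ::ₘ (Fm.all (B.ren r)) ::ₘ Γ₀)
        (by simp only [Multiset.map_cons, Fm.ren, Fm.ren_inst];
            exact MsGe.cons (Fm.ge.refl _) (MsGe.cons (Fm.ge.refl _) hge₀))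
      refine ⟨CProof.allL (B := B.ren r) (t.ren r) q, fun hI => ?_, fun hc => ?_⟩
      · simp [CProof.isI] at hI ⊢
        exact ⟨hI.1, h1 hI.2⟩
      · simpa [CProof.mu] using h2 hc
  | @exR B Γ Δ t p ih =>
    intro r Γ' hge
    obtain ⟨q, h1, h2⟩ := ih r Γ' hge
    refine ⟨recast rfl (by simp [Fm.ren])
      (CProof.exR (B := B.ren r) (Γ := Γ') (Δ := Δ.map (Fm.ren r)) (t.ren r)
        (recast rfl (by simp [Fm.ren_inst]) q)), fun hI => ?_, fun hc => ?_⟩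
    · simp [CProof.isI] at hI ⊢
      exact ⟨hI.1, h1 hI.2⟩
    · simpa [CProof.mu] using h2 hc
  | @exL B Γ Δ c hc p ih =>
    intro r Γ' hge
    have hge2 : MsGe Γ' ((Fm.ex (B.ren r)) ::ₘ Γ.map (Fm.ren r)) := by
      simpa [Fm.ren] using hge
    obtain ⟨F, Γ₀, hgeF, rfl, hge₀⟩ := MsGe_cons_right hge2
    have hBc : ¬ B.constIn c := hc.1 (Fm.ex B) (Multiset.mem_cons_self _ _)
    cases hgeF with
    | refl =>
      set N : ℕ := msBnd ((Fm.ex (B.ren r)) ::ₘ (Γ₀ + Δ.map (Fm.ren r))) with hN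
      set r' : ℕ → ℕ := fun d => if d = c then N else r d with hr'
      have hΓmap : Γ.map (Fm.ren r') = Γ.map (Fm.ren r) := by
        refine Multiset.map_congr rfl fun G hG => Fm.ren_congr fun d hd => ?_
        have hd' : d ≠ c := fun e => hc.1 G (Multiset.mem_cons_of_mem hG) (e ▸ hd)
        simp [hr', hd']
      have hΔmap : Δ.map (Fm.ren r') = Δ.map (Fm.ren r) := by
        refine Multiset.map_congr rfl fun G hG => Fm.ren_congr fun d hd => ?_
        have hd' : d ≠ c := fun e => hc.2 G hG (e ▸ hd)
        simp [hr', hd']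
      have hBmap : (Fm.inst (Tm.const c) B).ren r' = Fm.inst (Tm.const N) (B.ren r) := by
        rw [Fm.inst, Fm.ren_subst]
        have hB : B.ren r' = B.ren r :=
          Fm.ren_congr fun d hd => by
            have hd' : d ≠ c := fun e => hBc (e ▸ hd)
            simp [hr', hd']
        simp [Tm.ren, hr', Fm.inst, hB]
        exact congrArg (Fm.subst 0 (Tm.const N)) hB
      have hgeIH : MsGe ((Fm.inst (Tm.const N) (B.ren r)) ::ₘ Γ₀)
          ((Fm.inst (Tm.const c) B ::ₘ Γ).map (Fm.ren r')) := by
        rw [Multiset.map_cons, hΓmap, hBmap]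
        exact MsGe.cons (Fm.ge.refl _) hge₀
      obtain ⟨q, h1, h2⟩ := ih r' _ hgeIH
      have hfresh : FreshSeq N ((Fm.ex (B.ren r)) ::ₘ Γ₀) (Δ.map (Fm.ren r)) := by
        constructor
        · intro F hF
          refine not_constIn_of_msBnd
            (Γ := (Fm.ex (B.ren r)) ::ₘ (Γ₀ + Δ.map (Fm.ren r))) ?_ le_rfl
          rcases Multiset.mem_cons.1 hF with h | h
          · exact h ▸ Multiset.mem_cons_self _ _
          · exact Multiset.mem_cons_of_mem (by simp [Multiset.mem_add, h])
        · intro F hF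
          exact not_constIn_of_msBnd
            (Γ := (Fm.ex (B.ren r)) ::ₘ (Γ₀ + Δ.map (Fm.ren r)))
            (Multiset.mem_cons_of_mem (by simp [Multiset.mem_add, hF])) le_rfl
      refine ⟨CProof.exL (B := B.ren r) (Γ := Γ₀) (Δ := Δ.map (Fm.ren r)) N hfresh
        (recast rfl (by rw [hΔmap]) q), fun hI => ?_, fun hcn => ?_⟩
      · simp [CProof.isI] at hI ⊢
        exact ⟨hI.1, h1 hI.2⟩
      · simpa [CProof.mu] using h2 hcn
    | ex c₀ hge' =>
      set r' : ℕ → ℕ := fun d => if d = c then c₀ else r d with hr'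
      have hΓmap : Γ.map (Fm.ren r') = Γ.map (Fm.ren r) := by
        refine Multiset.map_congr rfl fun G hG => Fm.ren_congr fun d hd => ?_
        have hd' : d ≠ c := fun e => hc.1 G (Multiset.mem_cons_of_mem hG) (e ▸ hd)
        simp [hr', hd']
      have hΔmap : Δ.map (Fm.ren r') = Δ.map (Fm.ren r) := by
        refine Multiset.map_congr rfl fun G hG => Fm.ren_congr fun d hd => ?_
        have hd' : d ≠ c := fun e => hc.2 G hG (e ▸ hd)
        simp [hr', hd']
      have hBmap : (Fm.inst (Tm.const c) B).ren r' = Fm.inst (Tm.const c₀) (B.ren r) := by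
        rw [Fm.inst, Fm.ren_subst]
        have hB : B.ren r' = B.ren r :=
          Fm.ren_congr fun d hd => by
            have hd' : d ≠ c := fun e => hBc (e ▸ hd)
            simp [hr', hd']
        simp [Tm.ren, hr', Fm.inst, hB]
        exact congrArg (Fm.subst 0 (Tm.const c₀)) hB
      have hgeIH : MsGe (F ::ₘ Γ₀) ((Fm.inst (Tm.const c) B ::ₘ Γ).map (Fm.ren r')) := by
        rw [Multiset.map_cons, hΓmap, hBmap]
        exact MsGe.cons hge' hge₀
      obtain ⟨q, h1, h2⟩ := ih r' _ hgeIH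
      refine ⟨recast rfl (by rw [hΔmap]) q, fun hI => ?_, fun hcn => ?_⟩
      · simp [CProof.isI] at hI
        rw [isI_recast]
        exact h1 hI.2
      · rw [mu_recast]
        simpa [CProof.mu] using h2 hcn
  | @allR B Γ Δ c hc p ih =>
    intro r Γ' hge
    have hBc : ¬ B.constIn c := hc.2 (Fm.all B) (Multiset.mem_cons_self _ _)
    set N : ℕ := msBnd ((Fm.all (B.ren r)) ::ₘ (Γ' + Δ.map (Fm.ren r))) with hN
    set r' : ℕ → ℕ := fun d => if d = c then N else r d with hr'
    have hΓmap : Γ.map (Fm.ren r') = Γ.map (Fm.ren r) := by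
      refine Multiset.map_congr rfl fun G hG => Fm.ren_congr fun d hd => ?_
      have hd' : d ≠ c := fun e => hc.1 G hG (e ▸ hd)
      simp [hr', hd']
    have hΔmap : Δ.map (Fm.ren r') = Δ.map (Fm.ren r) := by
      refine Multiset.map_congr rfl fun G hG => Fm.ren_congr fun d hd => ?_
      have hd' : d ≠ c := fun e => hc.2 G (Multiset.mem_cons_of_mem hG) (e ▸ hd)
      simp [hr', hd']
    have hBmap : (Fm.inst (Tm.const c) B).ren r' = Fm.inst (Tm.const N) (B.ren r) := by
      rw [Fm.inst, Fm.ren_subst]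
      have hB : B.ren r' = B.ren r :=
        Fm.ren_congr fun d hd => by
          have hd' : d ≠ c := fun e => hBc (e ▸ hd)
          simp [hr', hd']
      simp [Tm.ren, hr', Fm.inst, hB]
      exact congrArg (Fm.subst 0 (Tm.const N)) hB
    obtain ⟨q, h1, h2⟩ := ih r' Γ' (by rw [hΓmap]; exact hge)
    have hfresh : FreshSeq N Γ' ((Fm.all (B.ren r)) ::ₘ Δ.map (Fm.ren r)) := by
      constructor
      · intro F hF
        exact not_constIn_of_msBnd
          (Γ := (Fm.all (B.ren r)) ::ₘ (Γ' + Δ.map (Fm.ren r)))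
          (Multiset.mem_cons_of_mem (by simp [Multiset.mem_add, hF])) le_rfl
      · intro F hF
        refine not_constIn_of_msBnd
          (Γ := (Fm.all (B.ren r)) ::ₘ (Γ' + Δ.map (Fm.ren r))) ?_ le_rfl
        rcases Multiset.mem_cons.1 hF with h | h
        · exact h ▸ Multiset.mem_cons_self _ _
        · exact Multiset.mem_cons_of_mem (by simp [Multiset.mem_add, h])
    refine ⟨recast rfl (by simp [Fm.ren])
      (CProof.allR (B := B.ren r) (Γ := Γ') (Δ := Δ.map (Fm.ren r)) N hfresh
        (recast rfl (by rw [Multiset.map_cons, hΔmap, hBmap]) q)), fun hI => ?_, fun hcn => ?_⟩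
    · simp [CProof.isI] at hI ⊢
      exact ⟨hI.1, h1 hI.2⟩
    · simpa [CProof.mu] using h2 hcn

end GeTransfer


lemma IProv_ge {Γ Γ' : Multiset Fm} {F : Fm} (hge : MsGe Γ' Γ) (h : IProv Γ F) :
    IProv Γ' F := by
  obtain ⟨p, hp⟩ := h
  obtain ⟨q, h1, _⟩ := geTransfer False (fun h => h.elim) p id Γ'
    (by rw [msRenId]; exact hge)
  exact ⟨CProof.recast rfl (by simp [Fm.ren_id]) q, by rw [CProof.isI_recast]; exact h1 hp⟩
/-- Lemma `fromstronger`: if `Γ' ⪰ Γ`, then (i) for any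
formula `F`, `Γ → F` has an I-proof only if `Γ' → F` has one, and (ii) for any
multiset `Δ`, any C-proof `Ξ` of `Γ → Δ` yields a C-proof of `Γ' → Δ` whose
nonconstructiveness measure is at most `μ(Ξ)`. -/
theorem statement_4 (Γ Γ' : Multiset Fm) (h : MsGe Γ' Γ) :
    (∀ F : Fm, IProv Γ F → IProv Γ' F) ∧
    (∀ (Δ : Multiset Fm) (p : CProof Γ Δ), ∃ q : CProof Γ' Δ, q.mu ≤ p.mu) := by
  constructor
  · exact fun F => IProv_ge h
  · intro Δ p
    obtain ⟨q, _, h2⟩ := geTransfer True (fun _ _ _ _ hge hp => IProv_ge hge hp) p id Γ'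
      (by rw [msRenId]; exact h)
    refine ⟨CProof.recast rfl (by rw [msRenId]) q, ?_⟩
    rw [CProof.mu_recast]
    exact h2 trivial
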